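/- Given an automaton G on m labels and a finite set Σ = {A_1,…,A_m} of real n×n matrices, the constrained joint spectral radius equals the limit of the normalized joint spectral radii of the sets of admissible products: ρ(G,Σ) = lim_{l→∞} ρ(Π_l)^{1/l}. -/
import Mathlib

open Matrix Filter Topology

/-- An automaton on `m` labels: a strongly connected directed labelled graph with
node set `Fin q` and labelled edge set `E`. -/
structure Automaton (m : ℕ) where
  q : ℕ
  hq : 0 < q
  E : Finset (Fin q × Fin q × Fin m)
  strongly_connected :
    ∀ v w : Fin q, ∃ (l : ℕ) (u : ℕ → Fin q) (σ : ℕ → Fin m),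
      u 0 = v ∧ u l = w ∧ ∀ i < l, (u i, u (i + 1), σ i) ∈ E

/-- The words of length `l` accepted by the automaton `G`. -/
def Automaton.Lang {m : ℕ} (G : Automaton m) (l : ℕ) : Set (Fin l → Fin m) :=
  { w | ∃ u : ℕ → Fin G.q, ∀ i : Fin l, (u (i : ℕ), u ((i : ℕ) + 1), w i) ∈ G.E }

/-- The product `A_{w(l-1)} ⋯ A_{w(1)} A_{w(0)}` associated to a word `w` of length `l`. -/
def wordProd {m n : ℕ} (Sig : Fin m → Matrix (Fin n) (Fin n) ℝ) {l : ℕ}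
    (w : Fin l → Fin m) : Matrix (Fin n) (Fin n) ℝ :=
  ((List.finRange l).reverse.map (fun i => Sig (w i))).prod

/-- `Π_l`: the set of products of matrices of `Σ` along words of length `l` accepted by `G`. -/
def prodSet {m n : ℕ} (G : Automaton m) (Sig : Fin m → Matrix (Fin n) (Fin n) ℝ)
    (l : ℕ) : Set (Matrix (Fin n) (Fin n) ℝ) :=
  { M | ∃ w ∈ G.Lang l, M = wordProd Sig w }

/-- The set of products `B_t ⋯ B_1` of `t` matrices taken from the set `M`. -/
def productsOf {n : ℕ} (M : Set (Matrix (Fin n) (Fin n) ℝ)) (t : ℕ) :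
    Set (Matrix (Fin n) (Fin n) ℝ) :=
  { A | ∃ B : Fin t → Matrix (Fin n) (Fin n) ℝ, (∀ i, B i ∈ M) ∧
      A = ((List.finRange t).reverse.map B).prod }

namespace CJSRAux

variable {n : ℕ}

abbrev Mat (n : ℕ) := Matrix (Fin n) (Fin n) ℝ

def prodN (g : ℕ → Mat n) : ℕ → Mat n
  | 0 => 1
  | (k+1) => g k * prodN g k

lemma prodN_congr {g h : ℕ → Mat n} {l : ℕ} (H : ∀ i < l, g i = h i) :
    prodN g l = prodN h l := by
  induction l with
  | zero => rfl
  | succ k ih =>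
    simp only [prodN, H k (Nat.lt_succ_self k),
      ih (fun i hi => H i (hi.trans (Nat.lt_succ_self k)))]

lemma prodN_add (g : ℕ → Mat n) (a b : ℕ) :
    prodN g (a + b) = prodN (fun i => g (a + i)) b * prodN g a := by
  induction b with
  | zero => simp [prodN]
  | succ k ih =>
    have : a + (k + 1) = (a + k) + 1 := by omega
    rw [this]
    simp only [prodN, ih, mul_assoc]

lemma list_prod_eq_prodN (g : ℕ → Mat n) (l : ℕ) :
    ((List.finRange l).reverse.map (fun i : Fin l => g (i : ℕ))).prod = prodN g l := by
  induction l with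
  | zero => rfl
  | succ k ih =>
    rw [List.finRange_succ_last, List.reverse_append]
    simp only [List.reverse_singleton, List.singleton_append, List.map_cons, List.prod_cons,
      List.map_reverse, List.map_map, prodN, Fin.val_last]
    congr 1
    rw [← ih, List.map_reverse]
    congr 1

lemma prodN_mul (g : ℕ → Mat n) (l t : ℕ) :
    prodN g (l * t) = prodN (fun i => prodN (fun j => g (l * i + j)) l) t := by
  induction t with
  | zero => simp [prodN]
  | succ k ih =>
    have h : l * (k + 1) = l * k + l := by ring
    rw [h, prodN_add, ih]
    rfl

variable {m : ℕ}

lemma wordProd_eq_prodN (Sig : Fin m → Mat n) {l : ℕ} (w : Fin l → Fin m)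
    (g : ℕ → Mat n) (hg : ∀ i : Fin l, g (i : ℕ) = Sig (w i)) :
    wordProd Sig w = prodN g l := by
  rw [← list_prod_eq_prodN]
  unfold wordProd
  congr 1
  exact List.map_congr_left (fun i _ => (hg i).symm)

lemma prodSet_mul_subset (G : Automaton m) (Sig : Fin m → Mat n) (l t : ℕ) :
    prodSet G Sig (l * t) ⊆ productsOf (prodSet G Sig l) t := by
  rintro M ⟨w, ⟨u, hu⟩, rfl⟩
  have hb : ∀ (i : Fin t) (j : Fin l), l * (i : ℕ) + (j : ℕ) < l * t := by
    intro i j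
    calc l * (i : ℕ) + (j : ℕ) < l * (i : ℕ) + l := by omega
      _ = l * ((i : ℕ) + 1) := by ring
      _ ≤ l * t := Nat.mul_le_mul_left l i.isLt
  set g : ℕ → Mat n := fun i => if h : i < l * t then Sig (w ⟨i, h⟩) else 1 with hgdef
  refine ⟨fun i : Fin t => prodN (fun j => g (l * (i : ℕ) + j)) l, ?_, ?_⟩
  · intro i
    refine ⟨fun j : Fin l => w ⟨l * (i : ℕ) + (j : ℕ), hb i j⟩,
      ⟨fun k => u (l * (i : ℕ) + k), fun j => ?_⟩, ?_⟩
    · have := hu ⟨l * (i : ℕ) + (j : ℕ), hb i j⟩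
      simpa [Nat.add_assoc] using this
    · exact (wordProd_eq_prodN Sig _ _
        (fun j => by simp only [hgdef, dif_pos (hb i j)])).symm
  · rw [wordProd_eq_prodN Sig w g (fun i => by simp [hgdef, i.isLt]),
      prodN_mul, ← list_prod_eq_prodN]

lemma prodSet_finite (G : Automaton m) (Sig : Fin m → Mat n) (l : ℕ) :
    (prodSet G Sig l).Finite := by
  refine Set.Finite.subset (Set.finite_range (wordProd Sig (l := l))) ?_
  rintro M ⟨w, _, rfl⟩
  exact ⟨w, rfl⟩

lemma productsOf_finite {M : Set (Mat n)} (hM : M.Finite) (t : ℕ) :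
    (productsOf M t).Finite := by
  have h1 : (Set.pi Set.univ (fun _ : Fin t => M)).Finite := Set.Finite.pi (fun _ => hM)
  refine Set.Finite.subset (h1.image (fun B => ((List.finRange t).reverse.map B).prod)) ?_
  rintro A ⟨B, hB, rfl⟩
  exact ⟨B, fun i _ => hB i, rfl⟩

lemma nu_prodN_le (ν : Mat n → ℝ) (hν0 : ∀ A, 0 ≤ ν A)
    (hνmul : ∀ A B, ν (A * B) ≤ ν A * ν B)
    (g : ℕ → Mat n) (c : ℝ) (hc : 0 ≤ c) :
    ∀ t, (∀ i < t, ν (g i) ≤ c) → 0 < t → ν (prodN g t) ≤ c ^ t := by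
  intro t
  induction t with
  | zero => intro _ h; omega
  | succ k ih =>
    intro hg _
    rcases Nat.eq_zero_or_pos k with hk | hk
    · subst hk
      simpa [prodN] using hg 0 (by omega)
    · calc ν (g k * prodN g k) ≤ ν (g k) * ν (prodN g k) := hνmul _ _
        _ ≤ c * c ^ k := by
            refine mul_le_mul (hg k (by omega)) ?_ (hν0 _) hc
            exact ih (fun i hi => hg i (by omega)) hk
        _ = c ^ (k + 1) := by ring

end CJSRAux

open CJSRAux in
/-- The constrained joint spectral radius `ρ(G,Σ)` equals the limit of
the normalized joint spectral radii of the sets of admissible products: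
`ρ(G,Σ) = lim_{l→∞} ρ(Π_l)^{1/l}`, for any submultiplicative matrix norm `ν`. -/
theorem cjsr_eq_lim_jsr_prodSet_rpow {m n : ℕ} (G : Automaton m)
    (Sig : Fin m → Matrix (Fin n) (Fin n) ℝ)
    (ν : Matrix (Fin n) (Fin n) ℝ → ℝ)
    (hν0 : ∀ A, 0 ≤ ν A)
    (hνeq : ∀ A, ν A = 0 ↔ A = 0)
    (hνsmul : ∀ (c : ℝ) (A), ν (c • A) = |c| * ν A)
    (hνadd : ∀ A B, ν (A + B) ≤ ν A + ν B)
    (hνmul : ∀ A B, ν (A * B) ≤ ν A * ν B)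
    (ρG : ℝ) (ρPi : ℕ → ℝ)
    (hρG : Tendsto (fun t : ℕ => sSup (ν '' prodSet G Sig t) ^ ((t : ℝ)⁻¹))
      atTop (𝓝 ρG))
    (hρPi : ∀ l : ℕ, 0 < l →
      Tendsto (fun t : ℕ => sSup (ν '' productsOf (prodSet G Sig l) t) ^ ((t : ℝ)⁻¹))
        atTop (𝓝 (ρPi l))) :
    Tendsto (fun l : ℕ => ρPi l ^ ((l : ℝ)⁻¹)) atTop (𝓝 ρG) := by
  classical
  set S : ℕ → ℝ := fun t => sSup (ν '' prodSet G Sig t) with hSdef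
  set P : ℕ → ℕ → ℝ := fun l t => sSup (ν '' productsOf (prodSet G Sig l) t) with hPdef
  have hSnn : ∀ t, 0 ≤ S t := fun t =>
    Real.sSup_nonneg (by rintro x ⟨A, _, rfl⟩; exact hν0 A)
  have hPnn : ∀ l t, 0 ≤ P l t := fun l t =>
    Real.sSup_nonneg (by rintro x ⟨A, _, rfl⟩; exact hν0 A)
  have hρPinn : ∀ l, 0 < l → 0 ≤ ρPi l := fun l hl =>
    ge_of_tendsto' (hρPi l hl) (fun t => Real.rpow_nonneg (hPnn l t) _)
  -- every element of prodSet has norm ≤ S l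
  have hle : ∀ l A, A ∈ prodSet G Sig l → ν A ≤ S l := by
    intro l A hA
    exact le_csSup ((prodSet_finite G Sig l).image ν).bddAbove ⟨A, hA, rfl⟩
  -- upper bound: ρPi l ≤ S l
  have hupper : ∀ l, 0 < l → ρPi l ≤ S l := by
    intro l hl
    refine le_of_tendsto (hρPi l hl) ?_
    filter_upwards [eventually_ge_atTop 1] with t ht
    have ht0 : 0 < t := ht
    have h1 : P l t ≤ S l ^ t := by
      refine Real.sSup_le ?_ (pow_nonneg (hSnn l) t)
      rintro x ⟨A, ⟨B, hB, rfl⟩, rfl⟩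
      set Bext : ℕ → Mat n := fun i => if h : i < t then B ⟨i, h⟩ else 1 with hBext
      have hEq : ((List.finRange t).reverse.map B).prod = prodN Bext t := by
        rw [← list_prod_eq_prodN Bext t]
        congr 1
        refine List.map_congr_left (fun i _ => ?_)
        simp [hBext, i.isLt]
      rw [hEq]
      refine nu_prodN_le ν hν0 hνmul Bext (S l) (hSnn l) t ?_ ht0
      intro i hi
      simp only [hBext, dif_pos hi]
      exact hle l _ (hB ⟨i, hi⟩)
    calc P l t ^ ((t : ℝ)⁻¹) ≤ (S l ^ t) ^ ((t : ℝ)⁻¹) :=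
          Real.rpow_le_rpow (hPnn l t) h1 (by positivity)
      _ = S l := Real.pow_rpow_inv_natCast (hSnn l) (by omega)
  -- lower bound: ρG ≤ ρPi l ^ (1/l)
  have hlower : ∀ l, 0 < l → ρG ≤ ρPi l ^ ((l : ℝ)⁻¹) := by
    intro l hl
    have hmul : Tendsto (fun t : ℕ => l * t) atTop atTop := by
      refine tendsto_atTop_mono (fun t => ?_) tendsto_id
      calc (t : ℕ) = 1 * t := (one_mul t).symm
        _ ≤ l * t := Nat.mul_le_mul_right t hl
    have h1 : Tendsto (fun t : ℕ => S (l * t) ^ (((l * t : ℕ) : ℝ)⁻¹)) atTop (𝓝 ρG) :=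
      hρG.comp hmul
    have h2 : Tendsto (fun t : ℕ => (P l t ^ ((t : ℝ)⁻¹)) ^ ((l : ℝ)⁻¹)) atTop
        (𝓝 (ρPi l ^ ((l : ℝ)⁻¹))) := by
      have hcont : ContinuousAt (fun x : ℝ => x ^ ((l : ℝ)⁻¹)) (ρPi l) :=
        Real.continuousAt_rpow_const _ _ (Or.inr (by positivity))
      exact hcont.tendsto.comp (hρPi l hl)
    refine le_of_tendsto_of_tendsto h1 h2 ?_
    filter_upwards [eventually_ge_atTop 1] with t ht
    have hsub : S (l * t) ≤ P l t := by
      refine Real.sSup_le ?_ (hPnn l t)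
      rintro x ⟨A, hA, rfl⟩
      refine le_csSup ((productsOf_finite (prodSet_finite G Sig l) t).image ν).bddAbove ?_
      exact ⟨A, prodSet_mul_subset G Sig l t hA, rfl⟩
    have hcast : (((l * t : ℕ) : ℝ))⁻¹ = (t : ℝ)⁻¹ * (l : ℝ)⁻¹ := by
      push_cast
      rw [mul_inv, mul_comm]
    calc S (l * t) ^ (((l * t : ℕ) : ℝ)⁻¹) ≤ P l t ^ (((l * t : ℕ) : ℝ)⁻¹) :=
          Real.rpow_le_rpow (hSnn _) hsub (by positivity)
      _ = (P l t ^ ((t : ℝ)⁻¹)) ^ ((l : ℝ)⁻¹) := by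
          rw [hcast, Real.rpow_mul (hPnn l t)]
  -- squeeze
  refine tendsto_of_tendsto_of_tendsto_of_le_of_le' tendsto_const_nhds hρG ?_ ?_
  · filter_upwards [eventually_ge_atTop 1] with l hl
    exact hlower l hl
  · filter_upwards [eventually_ge_atTop 1] with l hl
    exact Real.rpow_le_rpow (hρPinn l hl) (hupper l hl) (by positivity)
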